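/- Let 2/3 < α < 1. For N ∈ ℕ let n^{(N)} be the integer sequence with n^{(N)}_k = (-1)^{N-k} C(N, N-k) for 0 ≤ k ≤ N and 0 otherwise. Then ∫_{-(1-α)/2}^{(1-α)/2} |Σ_k n^{(N)}_k e^{2πikt}|² dt ≤ (1-α) (2 sin(π(1-α)/2))^{2N}, and since 2 sin(π(1-α)/2) < 1 this quantity tends to 0 as N → ∞. -/

import Mathlib

/-! By the binomial theorem the Fourier series is `(e^{2πit} - 1)^N`, whose modulus is
`(2 |sin πt|)^N`. On `|t| ≤ (1-α)/2` this is at most `(2 sin(π(1-α)/2))^N`, and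
`π(1-α)/2 < π/6` makes the base smaller than `1`. -/

open MeasureTheory Real Filter

theorem sum_range_neg_one_pow_choose_mul_pow {R : Type*} [CommRing R] (x : R) (N : ℕ) :
    ∑ k ∈ Finset.range (N + 1), (-1 : R) ^ (N - k) * (N.choose (N - k) : R) * x ^ k =
      (x - 1) ^ N := by
  rw [sub_pow]
  refine Finset.sum_congr rfl fun k hk => ?_
  have hkN : k ≤ N := Nat.lt_succ_iff.mp (Finset.mem_range.mp hk)
  have hsign : (-1 : R) ^ (N - k) = (-1) ^ (k + N) := by
    rw [show k + N = N - k + 2 * k by omega, pow_add, pow_mul, neg_one_sq, one_pow, mul_one]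
  rw [Nat.choose_symm hkN, hsign, one_pow]
  ring

theorem Complex.norm_exp_two_pi_I_mul_ofReal_sub_one (t : ℝ) :
    ‖Complex.exp (2 * π * Complex.I * t) - 1‖ = 2 * |Real.sin (π * t)| := by
  have h := Complex.norm_exp_I_mul_ofReal_sub_one (2 * π * t)
  rw [show 2 * π * t / 2 = π * t by ring, norm_mul, Real.norm_two, Real.norm_eq_abs] at h
  rw [← h]
  push_cast
  ring_nf

theorem Real.abs_sin_le_sin_of_abs_le {x c : ℝ} (hxc : |x| ≤ c) (hc : c ≤ π / 2) :
    |sin x| ≤ sin c := by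
  obtain ⟨hlo, hhi⟩ := abs_le.mp hxc
  rw [abs_le, neg_le, ← sin_neg]
  exact ⟨sin_le_sin_of_le_of_le_pi_div_two (by linarith) hc (by linarith),
    sin_le_sin_of_le_of_le_pi_div_two (by linarith) hc hhi⟩

theorem Real.two_mul_sin_lt_one {x : ℝ} (hx : -(π / 2) ≤ x) (hx6 : x < π / 6) :
    2 * sin x < 1 := by
  have := sin_lt_sin_of_lt_of_le_pi_div_two hx (by linarith [pi_pos]) hx6
  rw [sin_pi_div_six] at this
  linarith

noncomputable def signedBinomialFourier (N : ℕ) (t : ℝ) : ℂ :=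
  ∑ k ∈ Finset.range (N + 1),
    (-1 : ℂ) ^ (N - k) * (N.choose (N - k) : ℂ) * Complex.exp (2 * π * Complex.I * k * t)

theorem signedBinomialFourier_eq (N : ℕ) (t : ℝ) :
    signedBinomialFourier N t = (Complex.exp (2 * π * Complex.I * t) - 1) ^ N := by
  rw [← sum_range_neg_one_pow_choose_mul_pow, signedBinomialFourier]
  refine Finset.sum_congr rfl fun k _ => ?_
  rw [← Complex.exp_nat_mul]
  ring_nf

theorem norm_signedBinomialFourier (N : ℕ) (t : ℝ) :
    ‖signedBinomialFourier N t‖ = (2 * |sin (π * t)|) ^ N := by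
  rw [signedBinomialFourier_eq, norm_pow, Complex.norm_exp_two_pi_I_mul_ofReal_sub_one]

theorem norm_signedBinomialFourier_le {a t : ℝ} (N : ℕ) (ht : |t| ≤ a) (ha : a ≤ 1 / 2) :
    ‖signedBinomialFourier N t‖ ≤ (2 * sin (π * a)) ^ N := by
  rw [norm_signedBinomialFourier]
  have hπt : |π * t| ≤ π * a := by
    rw [abs_mul, abs_of_pos pi_pos]
    exact mul_le_mul_of_nonneg_left ht pi_pos.le
  have hπa : π * a ≤ π / 2 := by nlinarith [pi_pos]
  gcongr
  exact abs_sin_le_sin_of_abs_le hπt hπa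

theorem setIntegral_norm_signedBinomialFourier_sq_le {a : ℝ} (N : ℕ) (ha0 : 0 ≤ a)
    (ha : a ≤ 1 / 2) :
    ∫ t in Set.Ioo (-a) a, ‖signedBinomialFourier N t‖ ^ 2 ≤
      2 * a * (2 * sin (π * a)) ^ (2 * N) := by
  have hbound : ∀ t ∈ Set.Ioo (-a) a,
      ‖‖signedBinomialFourier N t‖ ^ 2‖ ≤ (2 * sin (π * a)) ^ (2 * N) := by
    intro t ht
    rw [norm_pow, norm_norm, pow_mul']
    exact pow_le_pow_left₀ (norm_nonneg _)
      (norm_signedBinomialFourier_le N (abs_le.mpr ⟨ht.1.le, ht.2.le⟩) ha) 2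
  have hvol : volume.real (Set.Ioo (-a) a) = 2 * a := by
    rw [Real.volume_real_Ioo_of_le (by linarith)]
    ring
  calc ∫ t in Set.Ioo (-a) a, ‖signedBinomialFourier N t‖ ^ 2
      ≤ ‖∫ t in Set.Ioo (-a) a, ‖signedBinomialFourier N t‖ ^ 2‖ := Real.le_norm_self _
    _ ≤ (2 * sin (π * a)) ^ (2 * N) * volume.real (Set.Ioo (-a) a) :=
      norm_setIntegral_le_of_norm_le_const measure_Ioo_lt_top hbound
    _ = 2 * a * (2 * sin (π * a)) ^ (2 * N) := by rw [hvol, mul_comm]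

theorem tendsto_const_mul_pow_two_mul {r : ℝ} (C : ℝ) (hr0 : 0 ≤ r) (hr1 : r < 1) :
    Tendsto (fun N : ℕ => C * r ^ (2 * N)) atTop (nhds 0) := by
  have h := (tendsto_pow_atTop_nhds_zero_of_lt_one (sq_nonneg r)
    (pow_lt_one₀ hr0 hr1 two_ne_zero)).const_mul C
  rw [mul_zero] at h
  simpa only [pow_mul] using h

theorem stmt11 (α : ℝ) (h1 : 2/3 < α) (h2 : α < 1) :
    (∀ N : ℕ,
      (∫ t in Set.Ioo (-((1 - α)/2)) ((1 - α)/2),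
        ‖∑ k ∈ Finset.range (N + 1),
            ((-1 : ℂ) ^ (N - k) * (N.choose (N - k) : ℂ) *
              Complex.exp (2 * Real.pi * Complex.I * k * t))‖ ^ 2) ≤
      (1 - α) * (2 * Real.sin (Real.pi * (1 - α) / 2)) ^ (2 * N)) ∧
    2 * Real.sin (Real.pi * (1 - α) / 2) < 1 ∧
    Tendsto (fun N : ℕ =>
      ∫ t in Set.Ioo (-((1 - α)/2)) ((1 - α)/2),
        ‖∑ k ∈ Finset.range (N + 1),
            ((-1 : ℂ) ^ (N - k) * (N.choose (N - k) : ℂ) *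
              Complex.exp (2 * Real.pi * Complex.I * k * t))‖ ^ 2)
      atTop (nhds 0) := by
  have hπ := pi_pos
  have hbound (N : ℕ) := setIntegral_norm_signedBinomialFourier_sq_le N
    (a := (1 - α) / 2) (by linarith) (by linarith)
  simp only [← mul_div_assoc, mul_div_cancel_left₀ _ (two_ne_zero' ℝ)] at hbound
  have hsin_nonneg : 0 ≤ 2 * sin (π * (1 - α) / 2) :=
    mul_nonneg zero_le_two (sin_nonneg_of_nonneg_of_le_pi (by nlinarith) (by nlinarith))
  have hsin_lt : 2 * sin (π * (1 - α) / 2) < 1 :=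
    two_mul_sin_lt_one (by nlinarith) (by nlinarith)
  refine ⟨hbound, hsin_lt, squeeze_zero (fun N => ?_) hbound
    (tendsto_const_mul_pow_two_mul _ hsin_nonneg hsin_lt)⟩
  exact setIntegral_nonneg measurableSet_Ioo fun t _ => sq_nonneg _
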